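/- For every n ∈ ℕ*, Φ ∈ ℝ, and a ∈ ℝ with (4 + Φ/π)/(1+a²) < n², there exists a unique α ∈ (0,1) satisfying H(α) = (π² + πΦ/4)/(n²(1+a²)), where H(α) = [(α² - 2)K(α) + 3E(α)]·K(α). -/

import Mathlib

open Real Asymptotics
open MeasureTheory

noncomputable section

/-- Complete elliptic integral of the first kind. -/
def Kc (α : ℝ) : ℝ := ∫ θ in (0:ℝ)..(π/2), 1 / Real.sqrt (1 - α^2 * Real.sin θ ^ 2)

/-- Complete elliptic integral of the second kind. -/
def Ec (α : ℝ) : ℝ := ∫ θ in (0:ℝ)..(π/2), Real.sqrt (1 - α^2 * Real.sin θ ^ 2)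

/-- The function H(α) = [(α²-2)K(α) + 3E(α)]·K(α). -/
def Hfun (α : ℝ) : ℝ := ((α^2 - 2) * Kc α + 3 * Ec α) * Kc α

namespace Ell

lemma u_pos {α : ℝ} (hα : |α| < 1) (θ : ℝ) : 0 < 1 - α^2 * Real.sin θ ^ 2 := by
  have h1 : α^2 < 1 := by
    have := abs_nonneg α
    nlinarith [sq_abs α]
  nlinarith [Real.sin_sq_le_one θ, sq_nonneg (Real.sin θ), sq_nonneg α]

lemma u_le_one (α θ : ℝ) : 1 - α^2 * Real.sin θ ^ 2 ≤ 1 := by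
  nlinarith [sq_nonneg (Real.sin θ), sq_nonneg α]

lemma sqrtu_pos {α : ℝ} (hα : |α| < 1) (θ : ℝ) :
    0 < Real.sqrt (1 - α^2 * Real.sin θ ^ 2) := Real.sqrt_pos.mpr (u_pos hα θ)

lemma contK {α : ℝ} (hα : |α| < 1) :
    Continuous (fun θ => 1 / Real.sqrt (1 - α^2 * Real.sin θ ^ 2)) := by
  apply Continuous.div continuous_const
  · exact (continuous_const.sub (continuous_const.mul (Real.continuous_sin.pow 2))).sqrt
  · exact fun θ => ne_of_gt (sqrtu_pos hα θ)

lemma contE (α : ℝ) :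
    Continuous (fun θ => Real.sqrt (1 - α^2 * Real.sin θ ^ 2)) :=
  (continuous_const.sub (continuous_const.mul (Real.continuous_sin.pow 2))).sqrt

lemma intK {α : ℝ} (hα : |α| < 1) :
    IntervalIntegrable (fun θ => 1 / Real.sqrt (1 - α^2 * Real.sin θ ^ 2))
      MeasureTheory.volume 0 (π/2) := (contK hα).intervalIntegrable _ _

lemma intE (α : ℝ) :
    IntervalIntegrable (fun θ => Real.sqrt (1 - α^2 * Real.sin θ ^ 2))
      MeasureTheory.volume 0 (π/2) := (contE α).intervalIntegrable _ _

lemma pi2_pos : (0:ℝ) < π/2 := by positivity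

lemma K_ge {α : ℝ} (hα : |α| < 1) : π/2 ≤ Kc α := by
  have h : ∫ θ in (0:ℝ)..(π/2), (1:ℝ) ≤ Kc α := by
    apply intervalIntegral.integral_mono_on (le_of_lt pi2_pos)
      (intervalIntegrable_const) (intK hα)
    intro θ _
    rw [le_div_iff₀ (sqrtu_pos hα θ), one_mul]
    calc Real.sqrt (1 - α^2 * Real.sin θ ^ 2) ≤ Real.sqrt 1 :=
          Real.sqrt_le_sqrt (u_le_one α θ)
      _ = 1 := Real.sqrt_one
  simpa using h

lemma K_pos {α : ℝ} (hα : |α| < 1) : 0 < Kc α := lt_of_lt_of_le pi2_pos (K_ge hα)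

lemma E_le (α : ℝ) : Ec α ≤ π/2 := by
  have h : Ec α ≤ ∫ θ in (0:ℝ)..(π/2), (1:ℝ) := by
    apply intervalIntegral.integral_mono_on (le_of_lt pi2_pos) (intE α)
      (intervalIntegrable_const)
    intro θ _
    calc Real.sqrt (1 - α^2 * Real.sin θ ^ 2) ≤ Real.sqrt 1 :=
          Real.sqrt_le_sqrt (u_le_one α θ)
      _ = 1 := Real.sqrt_one
  simpa using h

lemma E_ge {α : ℝ} (hα : |α| < 1) : (1 - α^2) * Kc α ≤ Ec α := by
  have h : ∫ θ in (0:ℝ)..(π/2), (1 - α^2) * (1 / Real.sqrt (1 - α^2 * Real.sin θ ^ 2))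
      ≤ Ec α := by
    apply intervalIntegral.integral_mono_on (le_of_lt pi2_pos)
      ((intK hα).const_mul _) (intE α)
    intro θ _
    have hu := u_pos hα θ
    have hs := sqrtu_pos hα θ
    rw [mul_one_div, div_le_iff₀ hs, Real.mul_self_sqrt (le_of_lt hu)]
    nlinarith [Real.sin_sq_le_one θ, sq_nonneg α, sq_nonneg (Real.sin θ)]
  rw [intervalIntegral.integral_const_mul] at h
  exact h

lemma E_pos {α : ℝ} (hα : |α| < 1) : 0 < Ec α := by
  have h1 : (0:ℝ) < 1 - α^2 := by
    have := abs_nonneg α; nlinarith [sq_abs α]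
  exact lt_of_lt_of_le (mul_pos h1 (K_pos hα)) (E_ge hα)

end Ell

-- generic Cauchy-Schwarz for set integrals on Ioc
lemma CS_Ioc {a b : ℝ} (hab : a ≤ b) {f g : ℝ → ℝ} (hf : Continuous f) (hg : Continuous g)
    (hf0 : ∀ x, 0 ≤ f x) (hg0 : ∀ x, 0 ≤ g x) :
    (∫ x in Set.Ioc a b, f x * g x) ^ 2 ≤
      (∫ x in Set.Ioc a b, f x ^ 2) * (∫ x in Set.Ioc a b, g x ^ 2) := by
  set μ := volume.restrict (Set.Ioc a b)
  have h2 : (2:ℝ).HolderConjugate 2 := by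
    constructor <;> norm_num
  have hfm : MemLp f (ENNReal.ofReal 2) μ := by
    rw [show ENNReal.ofReal 2 = 2 by simp]
    rw [memLp_two_iff_integrable_sq hf.aestronglyMeasurable]
    exact (hf.pow 2).integrableOn_Ioc
  have hgm : MemLp g (ENNReal.ofReal 2) μ := by
    rw [show ENNReal.ofReal 2 = 2 by simp]
    rw [memLp_two_iff_integrable_sq hg.aestronglyMeasurable]
    exact (hg.pow 2).integrableOn_Ioc
  have := MeasureTheory.integral_mul_le_Lp_mul_Lq_of_nonneg h2
    (Filter.Eventually.of_forall hf0) (Filter.Eventually.of_forall hg0) hfm hgm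
  have hintf : 0 ≤ ∫ x, f x ^ 2 ∂μ := integral_nonneg (fun x => sq_nonneg _)
  have hintg : 0 ≤ ∫ x, g x ^ 2 ∂μ := integral_nonneg (fun x => sq_nonneg _)
  have hrw : ∀ (h : ℝ → ℝ), (∫ x, h x ^ (2:ℝ) ∂μ) = ∫ x, h x ^ 2 ∂μ := by
    intro h; apply integral_congr_ae; filter_upwards with x
    rw [← Real.rpow_natCast (h x) 2]; norm_num
  rw [hrw f, hrw g] at this
  have h0 : 0 ≤ ∫ x, f x * g x ∂μ := integral_nonneg (fun x => mul_nonneg (hf0 x) (hg0 x))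
  calc (∫ x, f x * g x ∂μ)^2 ≤ ((∫ x, f x ^ 2 ∂μ) ^ (1/(2:ℝ)) * (∫ x, g x ^ 2 ∂μ) ^ (1/(2:ℝ)))^2 := by
        apply pow_le_pow_left₀ h0 this
    _ = (∫ x, f x ^ 2 ∂μ) * (∫ x, g x ^ 2 ∂μ) := by
        rw [mul_pow, ← Real.rpow_natCast (_ ^ (1/(2:ℝ))) 2, ← Real.rpow_natCast (_ ^ (1/(2:ℝ))) 2,
          ← Real.rpow_mul hintf, ← Real.rpow_mul hintg]
        norm_num

namespace Ell

lemma Ioc_eq (f : ℝ → ℝ) (hf : Continuous f) :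
    (∫ θ in Set.Ioc (0:ℝ) (π/2), f θ) = ∫ θ in (0:ℝ)..(π/2), f θ := by
  rw [intervalIntegral.integral_of_le (le_of_lt pi2_pos)]

lemma EK_ge {α : ℝ} (hα : |α| < 1) : (π/2)^2 ≤ Ec α * Kc α := by
  set f : ℝ → ℝ := fun θ => Real.sqrt (Real.sqrt (1 - α^2 * Real.sin θ ^ 2)) with hf_def
  set g : ℝ → ℝ := fun θ => 1 / Real.sqrt (Real.sqrt (1 - α^2 * Real.sin θ ^ 2)) with hg_def
  have hfc : Continuous f := (contE α).sqrt
  have hsq4 : ∀ θ, 0 < Real.sqrt (Real.sqrt (1 - α^2 * Real.sin θ ^ 2)) :=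
    fun θ => Real.sqrt_pos.mpr (sqrtu_pos hα θ)
  have hgc : Continuous g := continuous_const.div hfc (fun θ => ne_of_gt (hsq4 θ))
  have h := CS_Ioc (le_of_lt pi2_pos) hfc hgc (fun x => Real.sqrt_nonneg _)
    (fun x => by positivity)
  have h1 : (∫ x in Set.Ioc (0:ℝ) (π/2), f x * g x) = π/2 := by
    have : ∀ x, f x * g x = 1 := by
      intro x
      simp only [hf_def, hg_def, mul_one_div]
      rw [div_self (ne_of_gt (hsq4 x))]
    simp only [this]
    simp [Real.volume_Ioc, le_of_lt pi2_pos]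
  have h2 : (∫ x in Set.Ioc (0:ℝ) (π/2), f x ^ 2) = Ec α := by
    have : ∀ x, f x ^ 2 = Real.sqrt (1 - α^2 * Real.sin x ^ 2) := by
      intro x; simp only [hf_def]; rw [Real.sq_sqrt (Real.sqrt_nonneg _)]
    simp only [this]
    exact Ioc_eq _ (contE α)
  have h3 : (∫ x in Set.Ioc (0:ℝ) (π/2), g x ^ 2) = Kc α := by
    have : ∀ x, g x ^ 2 = 1 / Real.sqrt (1 - α^2 * Real.sin x ^ 2) := by
      intro x; simp only [hg_def, div_pow, one_pow]
      rw [Real.sq_sqrt (Real.sqrt_nonneg _)]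
    simp only [this]
    exact Ioc_eq _ (contK hα)
  rw [h1, h2, h3] at h
  exact h

lemma Esq_le {α : ℝ} (hα : |α| < 1) : Ec α ^ 2 ≤ (π/2)^2 * (1 - α^2/2) := by
  have h := CS_Ioc (le_of_lt pi2_pos) (contE α) (continuous_const : Continuous (fun _ : ℝ => (1:ℝ)))
    (fun x => Real.sqrt_nonneg _) (fun x => zero_le_one)
  simp only [mul_one, one_pow] at h
  have h1 : (∫ x in Set.Ioc (0:ℝ) (π/2), Real.sqrt (1 - α^2 * Real.sin x ^ 2)) = Ec α :=
    Ioc_eq _ (contE α)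
  have h2 : (∫ x in Set.Ioc (0:ℝ) (π/2), Real.sqrt (1 - α^2 * Real.sin x ^ 2) ^ 2)
      = (π/2) * (1 - α^2/2) := by
    have : ∀ x, Real.sqrt (1 - α^2 * Real.sin x ^ 2) ^ 2 = 1 - α^2 * Real.sin x ^ 2 := by
      intro x; exact Real.sq_sqrt (le_of_lt (u_pos hα x))
    simp only [this]
    rw [Ioc_eq _ (by continuity)]
    rw [intervalIntegral.integral_sub (f := fun _ => (1:ℝ)) (g := fun x => α^2 * Real.sin x ^ 2) intervalIntegrable_const
      (((Real.continuous_sin.pow 2).intervalIntegrable _ _).const_mul (α^2))]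
    rw [intervalIntegral.integral_const_mul, integral_sin_sq]
    simp [Real.sin_pi_div_two, Real.cos_pi_div_two]
    ring
  have h3 : (∫ x in Set.Ioc (0:ℝ) (π/2), (1:ℝ)) = π/2 := by
    simp [Real.volume_Ioc, le_of_lt pi2_pos]
  rw [h1, h2, h3] at h
  calc Ec α ^2 ≤ (π/2) * (1 - α^2/2) * (π/2) := h
    _ = (π/2)^2 * (1-α^2/2) := by ring

lemma E_le_K {α : ℝ} (hα : |α| < 1) : Ec α ≤ (1 - α^2/2) * Kc α := by
  have h1 := EK_ge hα
  have h2 := Esq_le hα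
  have h3 := E_pos hα
  have h4 : (0:ℝ) < 1 - α^2/2 := by
    have := abs_nonneg α; nlinarith [sq_abs α]
  nlinarith
end Ell
namespace Ell

-- pointwise derivative in x of sqrt(1 - x^2 sin^2 θ)
lemma hasDerivAt_sqrtu {x : ℝ} (hx : |x| < 1) (θ : ℝ) :
    HasDerivAt (fun y : ℝ => Real.sqrt (1 - y^2 * Real.sin θ ^ 2))
      (-(x * Real.sin θ ^ 2) / Real.sqrt (1 - x^2 * Real.sin θ ^ 2)) x := by
  have hu : 0 < 1 - x^2 * Real.sin θ ^ 2 := by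
    have h1 : x^2 < 1 := by have := abs_nonneg x; nlinarith [sq_abs x]
    nlinarith [Real.sin_sq_le_one θ, sq_nonneg (Real.sin θ)]
  have hv : HasDerivAt (fun y : ℝ => 1 - y^2 * Real.sin θ ^ 2)
      (-(2 * x ^ 1 * Real.sin θ ^ 2)) x := ((hasDerivAt_pow 2 x).mul_const _).const_sub 1
  have h := hv.sqrt (ne_of_gt hu)
  convert h using 1
  rw [eq_div_iff (by positivity : (2:ℝ) * Real.sqrt (1 - x^2*Real.sin θ^2) ≠ 0)]
  field_simp

lemma hasDerivAt_invsqrtu {x : ℝ} (hx : |x| < 1) (θ : ℝ) :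
    HasDerivAt (fun y : ℝ => 1 / Real.sqrt (1 - y^2 * Real.sin θ ^ 2))
      (x * Real.sin θ ^ 2 / (Real.sqrt (1 - x^2 * Real.sin θ ^ 2))^3) x := by
  have hu : 0 < 1 - x^2 * Real.sin θ ^ 2 := by
    have h1 : x^2 < 1 := by have := abs_nonneg x; nlinarith [sq_abs x]
    nlinarith [Real.sin_sq_le_one θ, sq_nonneg (Real.sin θ)]
  have hs : 0 < Real.sqrt (1 - x^2 * Real.sin θ ^ 2) := Real.sqrt_pos.mpr hu
  have h := (hasDerivAt_const x (1:ℝ)).div (hasDerivAt_sqrtu hx θ) (ne_of_gt hs)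
  refine h.congr_deriv ?_
  symm
  have hw : Real.sqrt (1 - x^2 * Real.sin θ ^ 2) * Real.sqrt (1 - x^2 * Real.sin θ ^ 2)
      = 1 - x^2 * Real.sin θ ^ 2 := Real.mul_self_sqrt (le_of_lt hu)
  field_simp
  ring

lemma ball_abs_lt {α x : ℝ} (h0 : 0 < α) (h1 : α < 1)
    (hx : x ∈ Metric.ball α ((1-α)/2)) : |x| < (1+α)/2 := by
  rw [Metric.mem_ball, Real.dist_eq] at hx
  rw [abs_lt] at hx ⊢
  constructor <;> [nlinarith [hx.1]; nlinarith [hx.2]]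

lemma bound_aux {α x : ℝ} (h0 : 0 < α) (h1 : α < 1) (hx : |x| < (1+α)/2) (θ : ℝ) :
    Real.sqrt (1 - ((1+α)/2)^2) ≤ Real.sqrt (1 - x^2 * Real.sin θ ^ 2) := by
  apply Real.sqrt_le_sqrt
  nlinarith [Real.sin_sq_le_one θ, sq_nonneg (Real.sin θ), sq_abs x, abs_nonneg x,
    sq_nonneg (|x| + (1+α)/2)]

lemma hasDerivAt_Ec {α : ℝ} (h0 : 0 < α) (h1 : α < 1) :
    HasDerivAt Ec ((Ec α - Kc α) / α) α := by
  have hαabs : |α| < 1 := by rw [abs_lt]; constructor <;> linarith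
  set b := (1+α)/2 with hb
  have hb1 : b < 1 := by rw [hb]; linarith
  have hbpos : 0 < 1 - b^2 := by nlinarith
  set C := 1 / Real.sqrt (1 - b^2) with hC
  have key := intervalIntegral.hasDerivAt_integral_of_dominated_loc_of_deriv_le
    (F := fun x θ => Real.sqrt (1 - x^2 * Real.sin θ ^ 2))
    (F' := fun x θ => -(x * Real.sin θ ^ 2) / Real.sqrt (1 - x^2 * Real.sin θ ^ 2))
    (x₀ := α) (a := 0) (b := π/2) (μ := volume) (bound := fun _ => C)
    (Metric.ball_mem_nhds α (show (0:ℝ) < (1-α)/2 by linarith))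
    (Filter.Eventually.of_forall (fun x => (contE x).aestronglyMeasurable))
    (intE α)
    (by
      apply Continuous.aestronglyMeasurable
      apply Continuous.div ((continuous_const.mul (Real.continuous_sin.pow 2)).neg) (contE α)
      exact fun θ => ne_of_gt (sqrtu_pos hαabs θ))
    (Filter.Eventually.of_forall (fun θ => fun _ => fun x hx => by
      have hxb := ball_abs_lt h0 h1 hx
      have hsle := bound_aux h0 h1 hxb θ
      have hs2 : 0 < Real.sqrt (1 - b^2) := Real.sqrt_pos.mpr hbpos
      rw [Real.norm_eq_abs, abs_div, abs_of_nonneg (Real.sqrt_nonneg _), hC]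
      rw [div_le_div_iff₀ (lt_of_lt_of_le hs2 hsle) hs2]
      have h6 : |(-(x * Real.sin θ ^ 2))| ≤ 1 := by
        rw [abs_neg, abs_mul]
        have : |Real.sin θ ^2| ≤ 1 := by
          rw [abs_of_nonneg (sq_nonneg _)]; exact Real.sin_sq_le_one θ
        nlinarith [abs_nonneg x, abs_nonneg (Real.sin θ ^2)]
      calc |(-(x * Real.sin θ ^ 2))| * Real.sqrt (1-b^2) ≤ 1 * Real.sqrt (1-b^2) := by
            nlinarith [Real.sqrt_nonneg (1-b^2)]
        _ ≤ 1 * Real.sqrt (1 - x^2*Real.sin θ^2) := by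
            rw [one_mul, one_mul]; simpa using hsle))
    (intervalIntegrable_const)
    (Filter.Eventually.of_forall (fun θ => fun _ => fun x hx => by
      have hxb := ball_abs_lt h0 h1 hx
      exact hasDerivAt_sqrtu (lt_trans hxb hb1) θ))
  obtain ⟨-, hd⟩ := key
  have heq : (∫ θ in (0:ℝ)..(π/2), -(α * Real.sin θ ^ 2) / Real.sqrt (1 - α^2*Real.sin θ^2))
      = (Ec α - Kc α) / α := by
    have hptw : ∀ θ, -(α * Real.sin θ ^ 2) / Real.sqrt (1 - α^2*Real.sin θ^2)
        = (Real.sqrt (1 - α^2*Real.sin θ^2) - 1/Real.sqrt (1 - α^2*Real.sin θ^2)) * (1/α) := by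
      intro θ
      have hu := u_pos hαabs θ
      have hs := sqrtu_pos hαabs θ
      have hw := Real.mul_self_sqrt (le_of_lt hu)
      field_simp
      nlinarith [hw]
    rw [intervalIntegral.integral_congr (fun θ _ => hptw θ)]
    rw [intervalIntegral.integral_mul_const,
      intervalIntegral.integral_sub (intE α) (intK hαabs)]
    rw [mul_one_div]
    rfl
  rw [heq] at hd
  exact hd

lemma hasDerivAt_phi {α : ℝ} (h0 : 0 < α) (h1 : α < 1) (θ : ℝ) :
    HasDerivAt (fun t : ℝ => -(α/(1-α^2)) * (Real.sin t * Real.cos t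
        / Real.sqrt (1 - α^2 * Real.sin t ^ 2)))
      (α * Real.sin θ^2 / (Real.sqrt (1 - α^2 * Real.sin θ ^ 2))^3
        - α * Real.cos θ^2 / ((1-α^2) * Real.sqrt (1 - α^2 * Real.sin θ ^ 2))) θ := by
  have hu : 0 < 1 - α^2 * Real.sin θ ^ 2 := by
    nlinarith [Real.sin_sq_le_one θ, sq_nonneg (Real.sin θ)]
  have hs : 0 < Real.sqrt (1 - α^2 * Real.sin θ ^ 2) := Real.sqrt_pos.mpr hu
  have hn : HasDerivAt (fun t => Real.sin t * Real.cos t)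
      (Real.cos θ * Real.cos θ + Real.sin θ * -Real.sin θ) θ :=
    (Real.hasDerivAt_sin θ).mul (Real.hasDerivAt_cos θ)
  have hv : HasDerivAt (fun t => 1 - α^2 * Real.sin t ^ 2)
      (-(α^2 * (2 * Real.sin θ ^ 1 * Real.cos θ))) θ := by
    exact (((Real.hasDerivAt_sin θ).pow 2).const_mul (α^2)).const_sub 1
  have hd := hv.sqrt (ne_of_gt hu)
  have h := (hn.div hd (ne_of_gt hs)).const_mul (-(α/(1-α^2)))
  refine h.congr_deriv ?_
  symm
  have hw : Real.sqrt (1 - α^2*Real.sin θ^2) * Real.sqrt (1 - α^2*Real.sin θ^2)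
      = 1 - α^2*Real.sin θ^2 := Real.mul_self_sqrt (le_of_lt hu)
  have hpy : Real.sin θ^2 + Real.cos θ^2 = 1 := Real.sin_sq_add_cos_sq θ
  have ha : (0:ℝ) < 1 - α^2 := by nlinarith
  have hsq2 : Real.sqrt (1 - α^2*Real.sin θ^2) ^ 2 = 1 - α^2*Real.sin θ^2 :=
    Real.sq_sqrt hu.le
  have hsq4 : Real.sqrt (1 - α^2*Real.sin θ^2) ^ 4 = (1 - α^2*Real.sin θ^2)^2 := by
    rw [show (4:ℕ) = 2*2 by norm_num, pow_mul, hsq2]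
  have hsq6 : Real.sqrt (1 - α^2*Real.sin θ^2) ^ 6 = (1 - α^2*Real.sin θ^2)^3 := by
    rw [show (6:ℕ) = 2*3 by norm_num, pow_mul, hsq2]
  have hc : Real.cos θ^2 = 1 - Real.sin θ^2 := by linarith
  field_simp
  ring_nf
  rw [show Real.sin θ ^ 2 * α ^ 2 = α ^ 2 * Real.sin θ ^ 2 by ring]
  linear_combination (-Real.sin θ ^ 2) * hsq2 + (α ^ 2 * Real.sin θ ^ 2) * hpy

lemma contJ {α : ℝ} (hα : |α| < 1) :
    Continuous (fun θ => α * Real.sin θ^2 / (Real.sqrt (1 - α^2 * Real.sin θ ^ 2))^3) := by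
  apply Continuous.div (continuous_const.mul (Real.continuous_sin.pow 2)) ((contE α).pow 3)
  exact fun θ => pow_ne_zero 3 (ne_of_gt (sqrtu_pos hα θ))

lemma contJ2 {α : ℝ} (hα : |α| < 1) (ha : (1:ℝ) - α^2 ≠ 0) :
    Continuous (fun θ => α * Real.cos θ^2 / ((1-α^2) * Real.sqrt (1 - α^2 * Real.sin θ ^ 2))) := by
  apply Continuous.div (continuous_const.mul (Real.continuous_cos.pow 2))
    (continuous_const.mul (contE α))
  exact fun θ => mul_ne_zero ha (ne_of_gt (sqrtu_pos hα θ))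

lemma Jint {α : ℝ} (h0 : 0 < α) (h1 : α < 1) :
    (∫ θ in (0:ℝ)..(π/2), α * Real.sin θ^2 / (Real.sqrt (1 - α^2 * Real.sin θ ^ 2))^3)
      = (Ec α - (1-α^2) * Kc α) / (α * (1-α^2)) := by
  have hαabs : |α| < 1 := by rw [abs_lt]; constructor <;> linarith
  have ha : (0:ℝ) < 1 - α^2 := by nlinarith
  have hftc := intervalIntegral.integral_eq_sub_of_hasDerivAt
    (f := fun t : ℝ => -(α/(1-α^2)) * (Real.sin t * Real.cos t
        / Real.sqrt (1 - α^2 * Real.sin t ^ 2)))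
    (f' := fun θ => α * Real.sin θ^2 / (Real.sqrt (1 - α^2 * Real.sin θ ^ 2))^3
        - α * Real.cos θ^2 / ((1-α^2) * Real.sqrt (1 - α^2 * Real.sin θ ^ 2)))
    (a := 0) (b := π/2)
    (fun θ _ => hasDerivAt_phi h0 h1 θ)
    (((contJ hαabs).sub (contJ2 hαabs (ne_of_gt ha))).intervalIntegrable _ _)
  simp only [Real.sin_pi_div_two, Real.cos_pi_div_two, Real.sin_zero, mul_zero, zero_mul,
    one_mul, zero_div, sub_zero, mul_zero, sub_self] at hftc
  rw [intervalIntegral.integral_sub ((contJ hαabs).intervalIntegrable _ _)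
    ((contJ2 hαabs (ne_of_gt ha)).intervalIntegrable _ _)] at hftc
  have hz : (∫ θ in (0:ℝ)..(π/2), α * Real.sin θ^2 / (Real.sqrt (1 - α^2 * Real.sin θ ^ 2))^3)
      = ∫ θ in (0:ℝ)..(π/2), α * Real.cos θ^2 / ((1-α^2) * Real.sqrt (1 - α^2*Real.sin θ^2)) := by
    linarith [sub_eq_zero.mp hftc]
  rw [hz]
  have hptw : ∀ θ, α * Real.cos θ^2 / ((1-α^2) * Real.sqrt (1 - α^2*Real.sin θ^2))
      = (Real.sqrt (1 - α^2*Real.sin θ^2) - (1-α^2) * (1/Real.sqrt (1 - α^2*Real.sin θ^2)))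
        * (1/(α*(1-α^2))) := by
    intro θ
    have hu := u_pos hαabs θ
    have hs := sqrtu_pos hαabs θ
    have hw := Real.mul_self_sqrt (le_of_lt hu)
    have hc : Real.cos θ^2 = 1 - Real.sin θ^2 := by
      linarith [Real.sin_sq_add_cos_sq θ]
    rw [hc]
    field_simp
    nlinarith [hw]
  rw [intervalIntegral.integral_congr (fun θ _ => hptw θ)]
  rw [intervalIntegral.integral_mul_const,
    intervalIntegral.integral_sub (intE α) ((intK hαabs).const_mul (1-α^2)),
    intervalIntegral.integral_const_mul]
  rw [mul_one_div]
  rfl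

lemma hasDerivAt_Kc {α : ℝ} (h0 : 0 < α) (h1 : α < 1) :
    HasDerivAt Kc ((Ec α - (1-α^2) * Kc α) / (α * (1-α^2))) α := by
  have hαabs : |α| < 1 := by rw [abs_lt]; constructor <;> linarith
  set b := (1+α)/2 with hb
  have hb1 : b < 1 := by rw [hb]; linarith
  have hbpos : 0 < 1 - b^2 := by nlinarith
  have hsb : 0 < Real.sqrt (1 - b^2) := Real.sqrt_pos.mpr hbpos
  set C := 1 / (Real.sqrt (1 - b^2))^3 with hC
  have key := intervalIntegral.hasDerivAt_integral_of_dominated_loc_of_deriv_le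
    (F := fun x θ => 1 / Real.sqrt (1 - x^2 * Real.sin θ ^ 2))
    (F' := fun x θ => x * Real.sin θ ^ 2 / (Real.sqrt (1 - x^2 * Real.sin θ ^ 2))^3)
    (x₀ := α) (a := 0) (b := π/2) (μ := volume) (bound := fun _ => C)
    (Metric.ball_mem_nhds α (show (0:ℝ) < (1-α)/2 by linarith))
    (Filter.Eventually.of_forall (fun x => by
      apply Measurable.aestronglyMeasurable
      apply Measurable.div measurable_const
      exact ((measurable_const.sub ((Real.measurable_sin.pow_const 2).const_mul _)).sqrt)))
    (intK hαabs)
    ((contJ hαabs).aestronglyMeasurable)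
    (Filter.Eventually.of_forall (fun θ => fun _ => fun x hx => by
      have hxb := ball_abs_lt h0 h1 hx
      have hsle := bound_aux h0 h1 hxb θ
      have hscube : (Real.sqrt (1-b^2))^3 ≤ (Real.sqrt (1 - x^2*Real.sin θ^2))^3 :=
        pow_le_pow_left₀ hsb.le hsle 3
      have hspos : 0 < (Real.sqrt (1 - x^2*Real.sin θ^2))^3 := lt_of_lt_of_le (by positivity) hscube
      rw [Real.norm_eq_abs, abs_div, abs_of_nonneg (le_of_lt hspos), hC]
      rw [div_le_div_iff₀ hspos (by positivity)]
      have h6 : |x * Real.sin θ ^ 2| ≤ 1 := by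
        rw [abs_mul]
        have h7 : |Real.sin θ ^2| ≤ 1 := by
          rw [abs_of_nonneg (sq_nonneg _)]; exact Real.sin_sq_le_one θ
        nlinarith [abs_nonneg x, abs_nonneg (Real.sin θ ^2)]
      calc |x * Real.sin θ ^ 2| * (Real.sqrt (1-b^2))^3 ≤ 1 * (Real.sqrt (1-b^2))^3 := by
            nlinarith [pow_pos hsb 3]
        _ ≤ 1 * (Real.sqrt (1 - x^2*Real.sin θ^2))^3 := by
            rw [one_mul, one_mul]; exact hscube))
    (intervalIntegrable_const)
    (Filter.Eventually.of_forall (fun θ => fun _ => fun x hx => by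
      have hxb := ball_abs_lt h0 h1 hx
      exact hasDerivAt_invsqrtu (lt_trans hxb hb1) θ))
  obtain ⟨-, hd⟩ := key
  rw [Jint h0 h1] at hd
  exact hd

lemma hasDerivAt_Hfun {α : ℝ} (h0 : 0 < α) (h1 : α < 1) :
    HasDerivAt Hfun
      ((2*α^1 * Kc α + (α^2-2) * ((Ec α - (1-α^2) * Kc α) / (α * (1-α^2)))
          + 3 * ((Ec α - Kc α) / α)) * Kc α
        + ((α^2-2) * Kc α + 3 * Ec α) * ((Ec α - (1-α^2) * Kc α) / (α * (1-α^2)))) α := by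
  have hK := hasDerivAt_Kc h0 h1
  have hE := hasDerivAt_Ec h0 h1
  have hA : HasDerivAt (fun x : ℝ => (x^2 - 2) * Kc x)
      (2*α^1 * Kc α + (α^2-2) * ((Ec α - (1-α^2) * Kc α) / (α * (1-α^2)))) α :=
    ((hasDerivAt_pow 2 α).sub_const 2).mul hK
  have hB : HasDerivAt (fun x : ℝ => 3 * Ec x) (3 * ((Ec α - Kc α) / α)) α := hE.const_mul 3
  have hG := (hA.add hB).mul hK
  exact hG

lemma deriv_Hfun_neg {α : ℝ} (h0 : 0 < α) (h1 : α < 1) :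
    (2*α^1 * Kc α + (α^2-2) * ((Ec α - (1-α^2) * Kc α) / (α * (1-α^2)))
        + 3 * ((Ec α - Kc α) / α)) * Kc α
      + ((α^2-2) * Kc α + 3 * Ec α) * ((Ec α - (1-α^2) * Kc α) / (α * (1-α^2))) < 0 := by
  have hαabs : |α| < 1 := by rw [abs_lt]; constructor <;> linarith
  have ha : (0:ℝ) < 1 - α^2 := by nlinarith
  have hK := K_pos hαabs
  have hL := E_ge hαabs
  have hU := E_le_K hαabs
  set K := Kc α
  set E := Ec α
  have hN : 3*E^2 - (4-2*α^2)*K*E + (1-α^2)*K^2 < 0 := by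
    set A := (1-α^2/2)*K - E with hA
    set B := E - (1-α^2)*K with hB
    have hA0 : 0 ≤ A := sub_nonneg.2 hU
    have hB0 : 0 ≤ B := sub_nonneg.2 hL
    have hAB : A + B = (α^2/2)*K := by rw [hA, hB]; ring
    have key : (α^2/2)*K * (3*E^2 - (4-2*α^2)*K*E + (1-α^2)*K^2)
        = -(α^2*(1-α^2)*(K^2*A) + (α^4/4)*(K^2*B) + (3*α^2/2)*(K*(B*A))) := by
      rw [hA, hB]; ring
    have hpos : 0 < α^2*(1-α^2)*(K^2*A) + (α^4/4)*(K^2*B) + (3*α^2/2)*(K*(B*A)) := by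
      rcases lt_or_eq_of_le hA0 with hA1 | hA1
      · have t1 : 0 < α^2*(1-α^2)*(K^2*A) := by positivity
        have t2 : 0 ≤ (α^4/4)*(K^2*B) := by positivity
        have t3 : 0 ≤ (3*α^2/2)*(K*(B*A)) := by positivity
        exact add_pos_of_pos_of_nonneg (add_pos_of_pos_of_nonneg t1 t2) t3
      · have hBpos : 0 < B := by
          have : A + B > 0 := by rw [hAB]; positivity
          linarith
        have t2 : 0 < (α^4/4)*(K^2*B) := by positivity
        have t1 : 0 ≤ α^2*(1-α^2)*(K^2*A) := by positivity
        have t3 : 0 ≤ (3*α^2/2)*(K*(B*A)) := by positivity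
        exact add_pos_of_pos_of_nonneg (add_pos_of_nonneg_of_pos t1 t2) t3
    nlinarith [mul_pos (show (0:ℝ) < (α^2/2)*K by positivity)
      (show (0:ℝ) < α^2*(1-α^2)*(K^2*A) + (α^4/4)*(K^2*B) + (3*α^2/2)*(K*(B*A)) from hpos)]
  have hD : (2*α^1 * K + (α^2-2) * ((E - (1-α^2) * K) / (α * (1-α^2)))
        + 3 * ((E - K) / α)) * K
      + ((α^2-2) * K + 3 * E) * ((E - (1-α^2) * K) / (α * (1-α^2)))
      = (3*E^2 - (4-2*α^2)*K*E + (1-α^2)*K^2) / (α * (1-α^2)) := by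
    field_simp
    ring
  rw [hD]
  exact div_neg_of_neg_of_pos hN (by positivity)

lemma strictAnti_H : StrictAntiOn Hfun (Set.Ioo (0:ℝ) 1) := by
  apply strictAntiOn_of_deriv_neg (convex_Ioo 0 1)
  · exact fun x hx => (hasDerivAt_Hfun hx.1 hx.2).continuousAt.continuousWithinAt
  · rw [interior_Ioo]
    intro x hx
    rw [(hasDerivAt_Hfun hx.1 hx.2).deriv]
    exact deriv_Hfun_neg hx.1 hx.2

lemma contOn_H : ContinuousOn Hfun (Set.Ioo (0:ℝ) 1) :=
  fun x hx => (hasDerivAt_Hfun hx.1 hx.2).continuousAt.continuousWithinAt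

lemma K_le {α : ℝ} (hα : |α| < 1) : Kc α ≤ (π/2) * (1 / Real.sqrt (1 - α^2)) := by
  have ha : (0:ℝ) < 1 - α^2 := by have := abs_nonneg α; nlinarith [sq_abs α]
  have hsa : 0 < Real.sqrt (1 - α^2) := Real.sqrt_pos.mpr ha
  have h : Kc α ≤ ∫ θ in (0:ℝ)..(π/2), 1 / Real.sqrt (1 - α^2) := by
    apply intervalIntegral.integral_mono_on (le_of_lt pi2_pos) (intK hα)
      intervalIntegrable_const
    intro θ _
    apply one_div_le_one_div_of_le hsa
    apply Real.sqrt_le_sqrt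
    nlinarith [Real.sin_sq_le_one θ, sq_nonneg α]
  simpa [mul_comm] using h

lemma E_ge2 {α : ℝ} (hα : |α| < 1) : (π/2) * Real.sqrt (1 - α^2) ≤ Ec α := by
  have h : (∫ θ in (0:ℝ)..(π/2), Real.sqrt (1 - α^2)) ≤ Ec α := by
    apply intervalIntegral.integral_mono_on (le_of_lt pi2_pos) intervalIntegrable_const
      (intE α)
    intro θ _
    apply Real.sqrt_le_sqrt
    nlinarith [Real.sin_sq_le_one θ, sq_nonneg α]
  simpa [mul_comm] using h

lemma H_lower {α : ℝ} (h0 : 0 ≤ α) (h2 : α^2 ≤ 1/2) :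
    (π^2/4) * (1 - 2*α^2) ≤ Hfun α := by
  have hα : |α| < 1 := by rw [abs_lt]; constructor <;> nlinarith
  have ha : (0:ℝ) < 1 - α^2 := by nlinarith
  have hsa : 0 < Real.sqrt (1 - α^2) := Real.sqrt_pos.mpr ha
  have hsa1 : Real.sqrt (1 - α^2) ≤ 1 := by
    have h := Real.sqrt_le_sqrt (show (1:ℝ)-α^2 ≤ 1 by nlinarith)
    rwa [Real.sqrt_one] at h
  have hsasq : Real.sqrt (1-α^2) * Real.sqrt (1-α^2) = 1 - α^2 := Real.mul_self_sqrt ha.le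
  have hKu := K_le hα
  have hKl := K_ge hα
  have hEl := E_ge2 hα
  have hKp := K_pos hα
  have hG : (π/2) * (1 - 2*α^2) / Real.sqrt (1-α^2) ≤ (α^2-2) * Kc α + 3 * Ec α := by
    have h1 : (α^2-2) * Kc α ≥ (α^2-2) * ((π/2) * (1/Real.sqrt (1-α^2))) := by
      apply mul_le_mul_of_nonpos_left hKu (by nlinarith)
    have h2' : 3 * Ec α ≥ 3 * ((π/2) * Real.sqrt (1-α^2)) := by linarith
    have h3 : (α^2-2) * ((π/2) * (1/Real.sqrt (1-α^2))) + 3 * ((π/2) * Real.sqrt (1-α^2))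
        = (π/2) * (1 - 2*α^2) / Real.sqrt (1-α^2) := by
      rw [eq_div_iff (ne_of_gt hsa)]
      field_simp
      linear_combination 3 * hsasq
    linarith
  have hGpos : 0 ≤ (π/2) * (1 - 2*α^2) / Real.sqrt (1-α^2) := by
    apply div_nonneg _ hsa.le
    have := pi_pos
    nlinarith
  have step1 : ((π/2) * (1 - 2*α^2) / Real.sqrt (1-α^2)) * (π/2) ≤ Hfun α := by
    rw [Hfun]
    apply mul_le_mul hG hKl (by positivity) (by linarith)
  have hdiv : (1-2*α^2) ≤ (1-2*α^2)/Real.sqrt (1-α^2) := by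
    rw [le_div_iff₀ hsa]
    nlinarith
  have step2 : (π^2/4) * (1 - 2*α^2) ≤ ((π/2) * (1 - 2*α^2) / Real.sqrt (1-α^2)) * (π/2) := by
    have e1 : ((π/2) * (1 - 2*α^2) / Real.sqrt (1-α^2)) * (π/2)
        = (π^2/4) * ((1-2*α^2)/Real.sqrt (1-α^2)) := by ring
    rw [e1]
    exact mul_le_mul_of_nonneg_left hdiv (by positivity)
  linarith

lemma H_upper {α : ℝ} (h0 : 0 < α) (h1 : α < 1) (hK : 3*π ≤ Kc α) :
    Hfun α ≤ -(Kc α)^2/2 := by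
  have hα : |α| < 1 := by rw [abs_lt]; constructor <;> linarith
  have hKp := K_pos hα
  have hE := E_le α
  have hG : (α^2-2) * Kc α + 3 * Ec α ≤ -(Kc α)/2 := by
    have hq : α^2 - 2 ≤ -1 := by nlinarith
    have h4 := mul_le_mul_of_nonneg_right hq hKp.le
    linarith
  rw [Hfun]
  nlinarith

lemma K_arsinh {α : ℝ} (h0 : 0 ≤ α) (h1 : α < 1) :
    Real.arsinh ((π/2) / Real.sqrt (2*(1-α))) ≤ Kc α := by
  have hα : |α| < 1 := by rw [abs_lt]; constructor <;> linarith
  set c := Real.sqrt (2*(1-α)) with hc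
  have hcpos : 0 < c := Real.sqrt_pos.mpr (by linarith)
  have hcsq : c^2 = 2*(1-α) := Real.sq_sqrt (by linarith)
  set g : ℝ → ℝ := fun θ => 1 / Real.sqrt (2*(1-α) + (π/2 - θ)^2) with hg
  have hgpos : ∀ θ, 0 < 2*(1-α) + (π/2 - θ)^2 := fun θ => by nlinarith [sq_nonneg (π/2 - θ)]
  have hgc : Continuous g := by
    apply Continuous.div continuous_const
    · apply Continuous.sqrt
      continuity
    · exact fun θ => ne_of_gt (Real.sqrt_pos.mpr (hgpos θ))
  have hcomp : ∀ θ ∈ Set.Icc (0:ℝ) (π/2), g θ ≤ 1 / Real.sqrt (1 - α^2 * Real.sin θ^2) := by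
    intro θ hθ
    apply one_div_le_one_div_of_le (sqrtu_pos hα θ)
    apply Real.sqrt_le_sqrt
    have hs1 : Real.sin θ ≤ 1 := Real.sin_le_one θ
    have hs0 : 0 ≤ Real.sin θ := Real.sin_nonneg_of_nonneg_of_le_pi hθ.1
      (by linarith [hθ.2, pi_pos])
    have hcos : 1 - (π/2-θ)^2/2 ≤ Real.cos (π/2 - θ) := Real.one_sub_sq_div_two_le_cos
    have hsin : Real.sin θ = Real.cos (π/2 - θ) := (Real.cos_pi_div_two_sub θ).symm
    nlinarith [sq_nonneg α, sq_nonneg (Real.sin θ), sq_nonneg (1 - α*Real.sin θ)]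
  have hmono : (∫ θ in (0:ℝ)..(π/2), g θ) ≤ Kc α :=
    intervalIntegral.integral_mono_on (le_of_lt pi2_pos) (hgc.intervalIntegrable _ _)
      (intK hα) hcomp
  have hX : ∀ θ : ℝ, Real.sqrt (2*(1-α) + (π/2-θ)^2)
      = c * Real.sqrt (1 + ((π/2-θ)/c)^2) := by
    intro θ
    rw [show 1 + ((π/2-θ)/c)^2 = (2*(1-α) + (π/2-θ)^2)/c^2 by
      field_simp
      linear_combination 4 * hcsq]
    rw [Real.sqrt_div (le_of_lt (hgpos θ)), Real.sqrt_sq hcpos.le]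
    field_simp
  have hftc := intervalIntegral.integral_eq_sub_of_hasDerivAt
    (f := fun θ : ℝ => -Real.arsinh ((π/2 - θ)/c)) (f' := g) (a := 0) (b := π/2)
    (fun θ _ => by
      have hinner : HasDerivAt (fun t : ℝ => (π/2 - t)/c) (-1/c) θ := by
        have h := ((hasDerivAt_id θ).const_sub (π/2)).div_const c
        simpa using h
      have harsinh := (Real.hasDerivAt_arsinh ((π/2 - θ)/c)).comp θ hinner
      have h2 := harsinh.neg
      refine h2.congr_deriv ?_
      symm
      have hsx : 0 < Real.sqrt (1 + ((π/2-θ)/c)^2) := Real.sqrt_pos.mpr (by positivity)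
      rw [hg]
      simp only
      rw [hX θ]
      field_simp)
    (hgc.intervalIntegrable _ _)
  have heval : (∫ θ in (0:ℝ)..(π/2), g θ) = Real.arsinh ((π/2)/c) := by
    rw [hftc]
    norm_num
  linarith [hmono, heval.symm.le]

lemma exists_K_large (M β : ℝ) (hβ : β ∈ Set.Ioo (0:ℝ) 1) :
    ∃ α : ℝ, β < α ∧ α < 1 ∧ M ≤ Kc α := by
  set S := max (Real.sinh M) 1 with hS
  have hS1 : 1 ≤ S := le_max_right _ _
  have hSpos : 0 < S := lt_of_lt_of_le one_pos hS1
  set δ := min ((1-β)/2) ((π/2)^2/(2*S^2)) with hδ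
  have hδpos : 0 < δ := by
    apply lt_min
    · linarith [hβ.2]
    · positivity
  set α := 1 - δ with hα
  have hβα : β < α := by
    have : δ ≤ (1-β)/2 := min_le_left _ _
    rw [hα]; linarith [hβ.1, hβ.2]
  have hα1 : α < 1 := by rw [hα]; linarith
  have hα0 : 0 ≤ α := by
    have h2 : δ ≤ (1-β)/2 := min_le_left _ _
    rw [hα]; linarith [hβ.1]
  refine ⟨α, hβα, hα1, ?_⟩
  have hKa := K_arsinh hα0 hα1
  have h1α : 1 - α = δ := by rw [hα]; ring
  rw [h1α] at hKa
  have hsinh : Real.sinh M ≤ (π/2) / Real.sqrt (2*δ) := by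
    have hs2 : 0 < Real.sqrt (2*δ) := Real.sqrt_pos.mpr (by linarith)
    have hle : Real.sqrt (2*δ) ≤ (π/2)/S := by
      have h3 : 2*δ ≤ ((π/2)/S)^2 := by
        have h4 : δ ≤ (π/2)^2/(2*S^2) := min_le_right _ _
        rw [div_pow]
        rw [le_div_iff₀ (by positivity)]
        have h5 : (π/2)^2/(2*S^2)*(2*S^2) = (π/2)^2 := div_mul_cancel₀ _ (by positivity)
        nlinarith [mul_le_mul_of_nonneg_right h4 (show (0:ℝ) ≤ 2*S^2 by positivity)]
      calc Real.sqrt (2*δ) ≤ Real.sqrt (((π/2)/S)^2) := Real.sqrt_le_sqrt h3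
        _ = (π/2)/S := Real.sqrt_sq (by positivity)
    calc Real.sinh M ≤ S := le_max_left _ _
      _ ≤ (π/2) / Real.sqrt (2*δ) := by
        rw [le_div_iff₀ hs2]
        have h6 := mul_le_mul_of_nonneg_left hle hSpos.le
        have h7 : S * (π/2/S) = π/2 := by field_simp
        nlinarith [h6, h7]
  have harsinh : M ≤ Real.arsinh ((π/2) / Real.sqrt (2*δ)) := by
    have := Real.arsinh_le_arsinh.mpr hsinh
    rwa [Real.arsinh_sinh] at this
  linarith

end Ell

open Ell in
theorem stmt12 (n : ℕ) (hn : 1 ≤ n) (Φ a : ℝ)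
    (h : (4 + Φ / π) / (1 + a ^ 2) < (n : ℝ) ^ 2) :
    ∃! α : ℝ, α ∈ Set.Ioo (0:ℝ) 1 ∧
      Hfun α = (π ^ 2 + π * Φ / 4) / ((n : ℝ) ^ 2 * (1 + a ^ 2)) := by
  have hpi := pi_pos
  set t := (π ^ 2 + π * Φ / 4) / ((n : ℝ) ^ 2 * (1 + a ^ 2)) with htdef
  have hn1 : (1:ℝ) ≤ (n:ℝ) := by exact_mod_cast hn
  have ha2 : (0:ℝ) < 1 + a^2 := by positivity
  have hD : (0:ℝ) < (n:ℝ)^2 * (1 + a^2) := by positivity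
  have hnum : 4 + Φ/π < (n:ℝ)^2 * (1+a^2) := by
    rw [div_lt_iff₀ ha2] at h
    nlinarith [h, sq_nonneg a]
  have ht : t < π^2/4 := by
    rw [htdef, div_lt_iff₀ hD]
    have he : π^2 + π*Φ/4 = (π^2/4) * (4 + Φ/π) := by field_simp
    rw [he]
    have := mul_lt_mul_of_pos_left hnum (show (0:ℝ) < π^2/4 by positivity)
    nlinarith [this]
  -- point near 0 where Hfun > t
  set ε := π^2/4 - t with hε
  have hεpos : 0 < ε := by rw [hε]; linarith
  set α₀ := min (1/2 : ℝ) (Real.sqrt (ε/π^2)) with hα₀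
  have hα₀pos : 0 < α₀ := lt_min (by norm_num) (Real.sqrt_pos.mpr (by positivity))
  have hα₀half : α₀ ≤ 1/2 := min_le_left _ _
  have hα₀sq : α₀^2 ≤ ε/π^2 := by
    have h1 : α₀ ≤ Real.sqrt (ε/π^2) := min_le_right _ _
    have h2 : α₀^2 ≤ (Real.sqrt (ε/π^2))^2 := pow_le_pow_left₀ hα₀pos.le h1 2
    rwa [Real.sq_sqrt (by positivity : (0:ℝ) ≤ ε/π^2)] at h2
  have hH0 : t < Hfun α₀ := by
    have hlow := H_lower hα₀pos.le (by nlinarith : α₀^2 ≤ 1/2)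
    have hm := mul_le_mul_of_nonneg_right hα₀sq (show (0:ℝ) ≤ π^2 by positivity)
    rw [div_mul_cancel₀ _ (show (π:ℝ)^2 ≠ 0 by positivity)] at hm
    rw [hε] at hm
    have : t < (π^2/4) * (1 - 2*α₀^2) := by nlinarith [hm, ht]
    linarith
  -- point near 1 where Hfun < t
  set M := max (3*π) (Real.sqrt (2*|t|+2)) with hM
  obtain ⟨α₁, hβα₁, hα₁1, hKM⟩ := exists_K_large M α₀
    ⟨hα₀pos, by linarith⟩
  have hα₁0 : 0 < α₁ := lt_trans hα₀pos hβα₁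
  have hup := H_upper hα₁0 hα₁1 (le_trans (le_max_left _ _) hKM)
  have hH1 : Hfun α₁ < t := by
    have hMs : Real.sqrt (2*|t|+2) ≤ M := le_max_right _ _
    have hM0 : 0 ≤ M := le_trans (Real.sqrt_nonneg _) hMs
    have hMsq : 2*|t|+2 ≤ M^2 := by
      have := pow_le_pow_left₀ (Real.sqrt_nonneg _) hMs 2
      rwa [Real.sq_sqrt (by positivity : (0:ℝ) ≤ 2*|t|+2)] at this
    have hKsq : M^2 ≤ (Kc α₁)^2 := pow_le_pow_left₀ hM0 hKM 2
    have habs : -|t| ≤ t := neg_abs_le t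
    nlinarith
  -- IVT
  have hsub : Set.Icc α₀ α₁ ⊆ Set.Ioo (0:ℝ) 1 := fun x hx =>
    ⟨lt_of_lt_of_le hα₀pos hx.1, lt_of_le_of_lt hx.2 hα₁1⟩
  have hivt := intermediate_value_Icc' (le_of_lt hβα₁) (contOn_H.mono hsub)
  have htmem : t ∈ Set.Icc (Hfun α₁) (Hfun α₀) := ⟨hH1.le, hH0.le⟩
  obtain ⟨x, hxmem, hxt⟩ := hivt htmem
  have hxIoo : x ∈ Set.Ioo (0:ℝ) 1 := hsub hxmem
  refine ⟨x, ⟨hxIoo, hxt⟩, ?_⟩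
  rintro y ⟨hyIoo, hyt⟩
  exact strictAnti_H.injOn hyIoo hxIoo (hyt.trans hxt.symm)
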